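/- arXiv:0903.4961 — 4 statements merged into one kernel-verified Lean document; each statement's English description precedes it below -/
import Mathlib

section
/- Let ts u ≤ tp u ≤ te u hold for all operations, let PO satisfy PO u v → tp u < tp v, let E satisfy the no-read-from-future condition E u v → (isWrite v ∨ tp u < tp v), and let T u v ↔ te u < ts v. Let C = [c₀, c₁, …, c_{k−1}] with k ≥ 2 be a cycle in the TGO execution graph, i.e. for each i the pair (c_i, c_{i+1 mod k}) is related by PO, E, or T. If c₀ = u and every operation v occurring in C with v ≠ u satisfies T v u, then there is an operation w occurring in C with E u w and isWrite w (indeed w = c₁, the successor of u in the cycle, is such a write). -/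
/-! Every operation `v ≠ u` of the cycle ends before `u` starts, so in particular the successor
`c₁` of `u` is performed no later than `u`. The edge `u → c₁` cannot then be a `PO` edge or a
`T` edge (both move strictly forward in performed time), and by the no-read-from-future
condition it can only be an `E` edge if `c₁` is a write. -/

section TGO

variable {Op : Type*} {ts tp te : Op → ℝ} {PO E T : Op → Op → Prop} {isWrite : Op → Prop}

theorem tp_lt_tp_of_te_lt_ts (hlegal : ∀ u : Op, ts u ≤ tp u ∧ tp u ≤ te u) {u v : Op}
    (h : te u < ts v) : tp u < tp v :=
  calc tp u ≤ te u := (hlegal u).2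
    _ < ts v := h
    _ ≤ tp v := (hlegal v).1

theorem E_and_isWrite_of_edge_of_tp_le (hlegal : ∀ u : Op, ts u ≤ tp u ∧ tp u ≤ te u)
    (hPO : ∀ u v : Op, PO u v → tp u < tp v) (hE : ∀ u v : Op, E u v → isWrite v ∨ tp u < tp v)
    (hT : ∀ u v : Op, T u v ↔ te u < ts v) {u v : Op} (hle : tp v ≤ tp u)
    (hedge : PO u v ∨ E u v ∨ T u v) : E u v ∧ isWrite v := by
  rcases hedge with hpo | he | ht
  · exact absurd (hPO u v hpo) hle.not_gt
  · exact ⟨he, (hE u v he).resolve_right hle.not_gt⟩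
  · exact absurd (tp_lt_tp_of_te_lt_ts hlegal ((hT u v).mp ht)) hle.not_gt

end TGO

/-- **Locality Lemma for TGO cycles.** If `C` is a cycle (of length ≥ 2) in
the TGO execution graph whose edges are `PO`, `E` or `T`, starting at `u`,
and every other operation of the cycle is before `u` in physical time order,
then the cycle contains a write operation `w` with `E u w`. -/
theorem tgo_cycle_write {Op : Type*} (ts tp te : Op → ℝ)
    (PO E : Op → Op → Prop) (isWrite : Op → Prop)
    (hlegal : ∀ u : Op, ts u ≤ tp u ∧ tp u ≤ te u)
    (hPO : ∀ u v : Op, PO u v → tp u < tp v)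
    (hE : ∀ u v : Op, E u v → isWrite v ∨ tp u < tp v)
    (T : Op → Op → Prop)
    (hT : ∀ u v : Op, T u v ↔ te u < ts v)
    (C : List Op) (hk : 2 ≤ C.length)
    (hcycle : ∀ i : Fin C.length,
      PO (C.get i) (C.get ⟨(i + 1) % C.length, Nat.mod_lt _ (by omega)⟩) ∨
      E (C.get i) (C.get ⟨(i + 1) % C.length, Nat.mod_lt _ (by omega)⟩) ∨
      T (C.get i) (C.get ⟨(i + 1) % C.length, Nat.mod_lt _ (by omega)⟩))
    (u : Op) (hu : C.get ⟨0, by omega⟩ = u)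
    (hbefore : ∀ v ∈ C, v ≠ u → T v u) :
    (∃ w ∈ C, E u w ∧ isWrite w) ∧
    (E u (C.get ⟨1, by omega⟩) ∧ isWrite (C.get ⟨1, by omega⟩)) := by
  set c₁ := C.get ⟨1, by omega⟩
  have hmem : c₁ ∈ C := List.get_mem _ _
  have hedge : PO u c₁ ∨ E u c₁ ∨ T u c₁ := by
    simpa [c₁, ← hu, Nat.mod_eq_of_lt (show 1 < C.length by omega)] using hcycle ⟨0, by omega⟩
  have hle : tp c₁ ≤ tp u := by
    by_cases hne : c₁ = u
    · exact (congrArg tp hne).le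
    · exact (tp_lt_tp_of_te_lt_ts hlegal ((hT _ _).mp (hbefore c₁ hmem hne))).le
  have hwrite := E_and_isWrite_of_edge_of_tp_le hlegal hPO hE hT hle hedge
  exact ⟨⟨c₁, hmem, hwrite⟩, hwrite⟩
end

section
/- If ts u ≤ tp u ≤ te u for all u, PO u v → tp u < tp v, E u v → tp u < tp v, and T u v ↔ te u < ts v, then the time global order TGO (the transitive closure of PO ∪ E ∪ T) satisfies TGO u v → tp u < tp v for all u, v; consequently TGO is irreflexive, i.e. the TGO execution graph of a correct execution is acyclic. -/
/-- With a legal pending-period assignment, the time global order `TGO`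
(transitive closure of `PO ∪ E ∪ T`) moves the performed time forward, and is
therefore irreflexive: the TGO execution graph of a correct execution is
acyclic. -/
theorem tgo_acyclic {Op : Type*} (ts tp te : Op → ℝ)
    (PO E : Op → Op → Prop)
    (hlegal : ∀ u : Op, ts u ≤ tp u ∧ tp u ≤ te u)
    (hPO : ∀ u v : Op, PO u v → tp u < tp v)
    (hE : ∀ u v : Op, E u v → tp u < tp v)
    (T : Op → Op → Prop)
    (hT : ∀ u v : Op, T u v ↔ te u < ts v)
    (TGO : Op → Op → Prop)
    (hTGO : TGO = Relation.TransGen (fun a b => PO a b ∨ E a b ∨ T a b)) :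
    (∀ u v : Op, TGO u v → tp u < tp v) ∧ (∀ u : Op, ¬ TGO u u) := by
  have step : ∀ a b : Op, (PO a b ∨ E a b ∨ T a b) → tp a < tp b := by
    rintro a b (h | h | h)
    · exact hPO a b h
    · exact hE a b h
    · exact lt_of_le_of_lt (hlegal a).2 (lt_of_lt_of_le ((hT a b).mp h) (hlegal b).1)
  subst hTGO
  have main : ∀ u v : Op, Relation.TransGen (fun a b => PO a b ∨ E a b ∨ T a b) u v → tp u < tp v := by
    intro u v h
    induction h with
    | single h => exact step _ _ h
    | tail _ h ih => exact ih.trans (step _ _ h)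
  exact ⟨main, fun u h => lt_irrefl _ (main u u h)⟩
end

section
/- Frontier node bound: let Op be a finite type with n elements, p ≥ 1, proc : Op → Fin p assign each operation to a processor, and ts, te : Op → ℝ with ts u ≤ te u for all u. Say the pending periods of u and v overlap when ts u ≤ te v and ts v ≤ te u. Suppose that for every operation u and every processor i, the number of operations v with proc v = i whose pending period overlaps that of u is at most C. Then the number of feasible frontiers — functions f : Fin p → Op with proc (f i) = i for all i and with the pending periods of f i and f j overlapping for all i, j — is at most n · C^(p−1). -/
/-- **Frontier node bound.** If on each processor at most `C` operations have
pending periods overlapping that of any given operation, then the number of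
feasible frontiers is at most `n * C ^ (p - 1)`. -/
theorem frontier_node_bound {Op : Type*} [Fintype Op] (n p C : ℕ)
    (hn : Nat.card Op = n) (hp : 1 ≤ p)
    (proc : Op → Fin p) (ts te : Op → ℝ)
    (hts : ∀ u : Op, ts u ≤ te u)
    (hC : ∀ (u : Op) (i : Fin p),
      Nat.card {v : Op // proc v = i ∧ ts u ≤ te v ∧ ts v ≤ te u} ≤ C) :
    Nat.card {f : Fin p → Op //
        (∀ i : Fin p, proc (f i) = i) ∧
        ∀ i j : Fin p, ts (f i) ≤ te (f j) ∧ ts (f j) ≤ te (f i)} ≤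
      n * C ^ (p - 1) := by
  classical
  set i₀ : Fin p := ⟨0, hp⟩ with hi₀
  set T := Σ u : Op, ∀ j : {j : Fin p // j ≠ i₀},
      {v : Op // proc v = (j : Fin p) ∧ ts u ≤ te v ∧ ts v ≤ te u} with hT
  have key : Nat.card {f : Fin p → Op //
        (∀ i : Fin p, proc (f i) = i) ∧
        ∀ i j : Fin p, ts (f i) ≤ te (f j) ∧ ts (f j) ≤ te (f i)} ≤ Nat.card T := by
    apply Nat.card_le_card_of_injective
      (fun f => (⟨f.1 i₀, fun j => ⟨f.1 j, f.2.1 j, (f.2.2 i₀ j).1, (f.2.2 i₀ j).2⟩⟩ : T))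
    intro f g h
    apply Subtype.ext
    funext i
    by_cases hi : i = i₀
    · subst hi
      exact congrArg Sigma.fst h
    · exact congrArg (fun t : T => (t.2 ⟨i, hi⟩).1) h
  refine key.trans ?_
  have hcard : Fintype.card {j : Fin p // j ≠ i₀} = p - 1 := by
    have := Fintype.card_subtype_compl (fun j : Fin p => j = i₀)
    simpa [Fintype.card_subtype_eq] using this
  calc Nat.card T = ∑ u : Op, ∏ j : {j : Fin p // j ≠ i₀},
        Fintype.card {v : Op // proc v = (j : Fin p) ∧ ts u ≤ te v ∧ ts v ≤ te u} := by
        simp [hT, Nat.card_eq_fintype_card, Fintype.card_sigma, Fintype.card_pi]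
    _ ≤ ∑ u : Op, ∏ _j : {j : Fin p // j ≠ i₀}, C := by
        refine Finset.sum_le_sum fun u _ => Finset.prod_le_prod' fun j _ => ?_
        have := hC u (j : Fin p)
        simpa [Nat.card_eq_fintype_card] using this
    _ = n * C ^ (p - 1) := by
        simp [Finset.prod_const, hcard, ← hn, Nat.card_eq_fintype_card, mul_comm]
end

section
/- Frontier edge bound: let Op be a finite type with n elements, p ≥ 2, proc : Op → Fin p, and ts, te : Op → ℝ with ts u ≤ te u for all u. Suppose that for every operation u and every processor i, the number of operations v with proc v = i whose pending period overlaps that of u is at most C. Then the number of ordered pairs (f, f') of feasible frontiers that differ in exactly one coordinate (i.e. there is exactly one i ∈ Fin p with f i ≠ f' i) is at most n · C^p · p. -/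
/-- **Frontier edge bound.** If on each processor at most `C` operations have
pending periods overlapping that of any given operation, then the number of
ordered pairs of feasible frontiers differing in exactly one coordinate (the
edges of the frontier graph) is at most `n * C ^ p * p`. -/
theorem frontier_edge_bound {Op : Type*} [Fintype Op] (n p C : ℕ)
    (hn : Nat.card Op = n) (hp : 2 ≤ p)
    (proc : Op → Fin p) (ts te : Op → ℝ)
    (hts : ∀ u : Op, ts u ≤ te u)
    (hC : ∀ (u : Op) (i : Fin p),
      Nat.card {v : Op // proc v = i ∧ ts u ≤ te v ∧ ts v ≤ te u} ≤ C) :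
    Nat.card {ff : (Fin p → Op) × (Fin p → Op) //
        ((∀ i : Fin p, proc (ff.1 i) = i) ∧
          ∀ i j : Fin p, ts (ff.1 i) ≤ te (ff.1 j) ∧ ts (ff.1 j) ≤ te (ff.1 i)) ∧
        ((∀ i : Fin p, proc (ff.2 i) = i) ∧
          ∀ i j : Fin p, ts (ff.2 i) ≤ te (ff.2 j) ∧ ts (ff.2 j) ≤ te (ff.2 i)) ∧
        (∃! i : Fin p, ff.1 i ≠ ff.2 i)} ≤
      n * C ^ p * p := by
  classical
  have h0 : 0 < p := by omega
  have h1 : 1 < p := by omega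
  set i0 : Fin p := ⟨0, h0⟩ with hi0def
  set i1 : Fin p := ⟨1, h1⟩ with hi1def
  have hne10 : i1 ≠ i0 := by simp [hi0def, hi1def, Fin.ext_iff]
  set j0 : Fin p → Fin p := fun i => if i = i0 then i1 else i0 with hj0def
  have hj0ne : ∀ i, j0 i ≠ i := by
    intro i
    by_cases h : i = i0
    · subst h; simpa [hj0def] using hne10
    · simp only [hj0def, if_neg h]
      exact fun hh => h hh.symm
  -- the target counting type
  set Q : Fin p → Op → (Fin p → Op) → Prop := fun i u G =>
    ∀ k, proc (G k) = (if k = j0 i then i else k) ∧ ts u ≤ te (G k) ∧ ts (G k) ≤ te u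
    with hQdef
  set B := {x : Fin p × Op × (Fin p → Op) // Q x.1 x.2.1 x.2.2} with hBdef
  -- Step 1: injection from edges into B
  have step1 : Nat.card {ff : (Fin p → Op) × (Fin p → Op) //
        ((∀ i : Fin p, proc (ff.1 i) = i) ∧
          ∀ i j : Fin p, ts (ff.1 i) ≤ te (ff.1 j) ∧ ts (ff.1 j) ≤ te (ff.1 i)) ∧
        ((∀ i : Fin p, proc (ff.2 i) = i) ∧
          ∀ i j : Fin p, ts (ff.2 i) ≤ te (ff.2 j) ∧ ts (ff.2 j) ≤ te (ff.2 i)) ∧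
        (∃! i : Fin p, ff.1 i ≠ ff.2 i)} ≤ Nat.card B := by
    -- the index where the two frontiers differ
    have idxspec : ∀ e : {ff : (Fin p → Op) × (Fin p → Op) //
        ((∀ i : Fin p, proc (ff.1 i) = i) ∧
          ∀ i j : Fin p, ts (ff.1 i) ≤ te (ff.1 j) ∧ ts (ff.1 j) ≤ te (ff.1 i)) ∧
        ((∀ i : Fin p, proc (ff.2 i) = i) ∧
          ∀ i j : Fin p, ts (ff.2 i) ≤ te (ff.2 j) ∧ ts (ff.2 j) ≤ te (ff.2 i)) ∧
        (∃! i : Fin p, ff.1 i ≠ ff.2 i)},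
        e.1.1 (Classical.choose e.2.2.2) ≠ e.1.2 (Classical.choose e.2.2.2) ∧
        ∀ y, e.1.1 y ≠ e.1.2 y → y = Classical.choose e.2.2.2 :=
      fun e => Classical.choose_spec e.2.2.2
    set idx := fun e : {ff : (Fin p → Op) × (Fin p → Op) //
        ((∀ i : Fin p, proc (ff.1 i) = i) ∧
          ∀ i j : Fin p, ts (ff.1 i) ≤ te (ff.1 j) ∧ ts (ff.1 j) ≤ te (ff.1 i)) ∧
        ((∀ i : Fin p, proc (ff.2 i) = i) ∧
          ∀ i j : Fin p, ts (ff.2 i) ≤ te (ff.2 j) ∧ ts (ff.2 j) ≤ te (ff.2 i)) ∧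
        (∃! i : Fin p, ff.1 i ≠ ff.2 i)} => Classical.choose e.2.2.2 with hidx
    -- for k ≠ idx e, the two frontiers agree
    have agree : ∀ e, ∀ k, k ≠ idx e → e.1.1 k = e.1.2 k := by
      intro e k hk
      by_contra h
      exact hk ((idxspec e).2 k h)
    have hQ : ∀ e, Q (idx e) (e.1.1 (j0 (idx e)))
        (fun k => if k = j0 (idx e) then e.1.1 (idx e) else e.1.2 k) := by
      intro e
      intro k
      by_cases h : k = j0 (idx e)
      · subst h
        simp only [if_pos rfl]
        refine ⟨e.2.1.1 (idx e), ?_, ?_⟩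
        · exact (e.2.1.2 (idx e) (j0 (idx e))).2
        · exact (e.2.1.2 (idx e) (j0 (idx e))).1
      · have hj : e.1.1 (j0 (idx e)) = e.1.2 (j0 (idx e)) :=
          agree e _ (hj0ne (idx e))
        simp only [if_neg h]
        refine ⟨e.2.2.1.1 k, ?_, ?_⟩
        · rw [hj]; exact (e.2.2.1.2 k (j0 (idx e))).2
        · rw [hj]; exact (e.2.2.1.2 k (j0 (idx e))).1
    apply Nat.card_le_card_of_injective
      (f := fun e => (⟨(idx e, e.1.1 (j0 (idx e)),
        fun k => if k = j0 (idx e) then e.1.1 (idx e) else e.1.2 k), hQ e⟩ : B))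
    intro e e' heq
    have heq' := Subtype.ext_iff.mp heq
    simp only [Prod.mk.injEq] at heq'
    obtain ⟨hidxeq, hueq, hGeq⟩ := heq'
    have hG : ∀ k, (if k = j0 (idx e) then e.1.1 (idx e) else e.1.2 k)
        = (if k = j0 (idx e') then e'.1.1 (idx e') else e'.1.2 k) :=
      fun k => congrFun hGeq k
    -- recover second frontier
    have hsnd : e.1.2 = e'.1.2 := by
      funext k
      by_cases h : k = j0 (idx e)
      · subst h
        have h1 : e.1.2 (j0 (idx e)) = e.1.1 (j0 (idx e)) :=
          (agree e _ (hj0ne (idx e))).symm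
        have h2 : e'.1.2 (j0 (idx e')) = e'.1.1 (j0 (idx e')) :=
          (agree e' _ (hj0ne (idx e'))).symm
        rw [h1, hueq, ← h2, ← hidxeq]
      · have := hG k
        rw [if_neg h, if_neg (by rw [← hidxeq]; exact h)] at this
        exact this
    have hfst : e.1.1 = e'.1.1 := by
      funext k
      by_cases h : k = idx e
      · subst h
        have := hG (j0 (idx e))
        rw [if_pos rfl, if_pos (by rw [hidxeq])] at this
        rw [this, hidxeq]
      · have h' : k ≠ idx e' := by rw [← hidxeq]; exact h
        rw [agree e k h, hsnd, ← agree e' k h']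
    exact Subtype.ext (Prod.ext hfst hsnd)
  -- Step 2: count B
  have step2 : Nat.card B ≤ n * C ^ p * p := by
    have e1 : B ≃ Σ i : Fin p, Σ u : Op, {G : Fin p → Op // Q i u G} :=
      { toFun := fun x => ⟨x.1.1, x.1.2.1, x.1.2.2, x.2⟩
        invFun := fun x => ⟨(x.1, x.2.1, x.2.2.1), x.2.2.2⟩
        left_inv := fun x => rfl
        right_inv := fun x => rfl }
    have hinner : ∀ i u, Nat.card {G : Fin p → Op // Q i u G} ≤ C ^ p := by
      intro i u
      have e2 : {G : Fin p → Op // Q i u G} ≃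
          ∀ k : Fin p, {v : Op // proc v = (if k = j0 i then i else k) ∧
            ts u ≤ te v ∧ ts v ≤ te u} :=
        Equiv.subtypePiEquivPi (p := fun k v => proc v = (if k = j0 i then i else k) ∧
          ts u ≤ te v ∧ ts v ≤ te u)
      rw [Nat.card_congr e2, Nat.card_pi]
      calc ∏ k : Fin p, Nat.card {v : Op // proc v = (if k = j0 i then i else k) ∧
            ts u ≤ te v ∧ ts v ≤ te u}
          ≤ ∏ _k : Fin p, C := Finset.prod_le_prod' (fun k _ => hC u _)
        _ = C ^ p := by simp
    rw [Nat.card_congr e1, Nat.card_eq_fintype_card, Fintype.card_sigma]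
    have hsum : ∀ i : Fin p, Fintype.card (Σ u : Op, {G : Fin p → Op // Q i u G})
        ≤ n * C ^ p := by
      intro i
      rw [Fintype.card_sigma]
      calc ∑ u : Op, Fintype.card {G : Fin p → Op // Q i u G}
          ≤ ∑ _u : Op, C ^ p := Finset.sum_le_sum (fun u _ => by
            rw [← Nat.card_eq_fintype_card]; exact hinner i u)
        _ = Fintype.card Op * C ^ p := by simp [Finset.sum_const, mul_comm]
        _ = n * C ^ p := by rw [← Nat.card_eq_fintype_card, hn]
    calc ∑ i : Fin p, Fintype.card (Σ u : Op, {G : Fin p → Op // Q i u G})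
        ≤ ∑ _i : Fin p, n * C ^ p := Finset.sum_le_sum (fun i _ => hsum i)
      _ = n * C ^ p * p := by simp [Finset.sum_const, mul_comm]
  exact le_trans step1 step2
end
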